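/- For |q| < 1, one has ∑_{n≥0} qⁿ/((q;q)_n (1-q^{n+1})²) = q^{-1} ∑_{m≥0} ( 1/(q^{1+m};q)_∞ − 1 ). -/

import Mathlib

/-!
Both `(z;q)_∞` and `e_q(z) = ∑ zⁿ/(q;q)_n` obey the functional equation
`f(z) = (1 - z) f(qz)`, `(z;q)_∞` on the left and `e_q` on the right, so `(z;q)_∞ e_q(z)` is
invariant under `z ↦ qz`; letting `qᵏz → 0` shows it equals `1`, which is Euler's identity
`1/(z;q)_∞ = e_q(z)`. With `z = q^{m+1}` the right-hand side becomes
`q⁻¹ ∑_m ∑_{n≥1} q^{(m+1)n}/(q;q)_n`; this double series converges absolutely because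
`|(q;q)_n|` is bounded below, and summing over `m` first gives `q⁻¹ ∑_{n≥1} qⁿ/((1 - qⁿ)(q;q)_n)`,
which is the left-hand side.
-/

/-- The finite q-Pochhammer symbol `(q;q)_n`. -/
noncomputable def qPoch (q : ℂ) (n : ℕ) : ℂ := ∏ i ∈ Finset.range n, (1 - q ^ (i + 1))

/-- The infinite q-Pochhammer symbol `(q;q)_∞`. -/
noncomputable def qPochInf (q : ℂ) : ℂ := ∏' i : ℕ, (1 - q ^ (i + 1))

/-- The infinite q-Pochhammer symbol `(a;q)_∞ = ∏_{i≥0} (1 - a q^i)`. -/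
noncomputable def pochInf (a q : ℂ) : ℂ := ∏' i : ℕ, (1 - a * q ^ i)

open Filter Topology

section NormedRing

variable {R : Type*} [SeminormedRing R] {a b : R}

lemma one_sub_ne_zero_of_norm_lt_one [NormOneClass R] (ha : ‖a‖ < 1) : 1 - a ≠ 0 := by
  rw [sub_ne_zero]
  rintro rfl
  simp at ha

lemma norm_mul_lt_one (ha : ‖a‖ ≤ 1) (hb : ‖b‖ < 1) : ‖a * b‖ < 1 :=
  (norm_mul_le a b).trans_lt (mul_lt_one_of_nonneg_of_lt_one_right ha (norm_nonneg b) hb)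

lemma norm_pow_le_one [NormOneClass R] (ha : ‖a‖ ≤ 1) (n : ℕ) : ‖a ^ n‖ ≤ 1 :=
  (norm_pow_le a n).trans (pow_le_one₀ (norm_nonneg a) ha)

lemma norm_pow_succ_lt_one (ha : ‖a‖ < 1) (n : ℕ) : ‖a ^ (n + 1)‖ < 1 :=
  (norm_pow_le' a n.succ_pos).trans_lt (pow_lt_one₀ (norm_nonneg a) ha n.succ_ne_zero)

end NormedRing

section QPochhammer

variable {q z : ℂ}

@[simp]
lemma qPoch_zero (q : ℂ) : qPoch q 0 = 1 := rfl

lemma qPoch_succ (q : ℂ) (n : ℕ) : qPoch q (n + 1) = qPoch q n * (1 - q ^ (n + 1)) :=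
  Finset.prod_range_succ _ n

-- `|(q;q)_n| ≥ (|q|;|q|)_n ≥ (|q|;|q|)_∞ > 0`
lemma exists_pos_le_norm_qPoch (hq : ‖q‖ < 1) : ∃ c > 0, ∀ n, c ≤ ‖qPoch q n‖ := by
  set r := ‖q‖
  have hfac : ∀ i : ℕ, 0 < 1 - r ^ (i + 1) := fun i => by
    simpa [r] using norm_pow_succ_lt_one hq i
  have hlog : Summable fun i : ℕ => Real.log (1 - r ^ (i + 1)) := by
    simpa [sub_eq_add_neg] using Real.summable_log_one_add_of_summable
      ((summable_nat_add_iff 1).mpr (summable_geometric_of_lt_one (norm_nonneg q) hq)).neg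
  have hanti : Antitone fun n => ∏ i ∈ Finset.range n, (1 - r ^ (i + 1)) :=
    antitone_nat_of_succ_le fun n => by
      rw [Finset.prod_range_succ]
      exact mul_le_of_le_one_right (Finset.prod_nonneg fun i _ => (hfac i).le)
        (sub_le_self _ (by positivity))
  refine ⟨Real.exp (∑' i, Real.log (1 - r ^ (i + 1))), Real.exp_pos _, fun n => ?_⟩
  calc Real.exp (∑' i, Real.log (1 - r ^ (i + 1)))
      ≤ ∏ i ∈ Finset.range n, (1 - r ^ (i + 1)) :=
        hanti.le_of_tendsto (Real.hasProd_of_hasSum_log hfac hlog.hasSum).tendsto_prod_nat n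
    _ ≤ ‖qPoch q n‖ := by
        rw [qPoch, norm_prod]
        refine Finset.prod_le_prod (fun i _ => (hfac i).le) fun i _ => ?_
        simpa [r] using norm_sub_norm_le (1 : ℂ) (q ^ (i + 1))

lemma qPoch_ne_zero (hq : ‖q‖ < 1) (n : ℕ) : qPoch q n ≠ 0 := by
  obtain ⟨c, hc, hle⟩ := exists_pos_le_norm_qPoch hq
  exact norm_pos_iff.mp (hc.trans_le (hle n))

noncomputable def qExp (q z : ℂ) : ℂ := ∑' n : ℕ, z ^ n / qPoch q n

lemma summable_pow_div_qPoch (hq : ‖q‖ < 1) (hz : ‖z‖ < 1) :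
    Summable fun n : ℕ => z ^ n / qPoch q n := by
  obtain ⟨c, hc, hle⟩ := exists_pos_le_norm_qPoch hq
  refine ((summable_geometric_of_lt_one (norm_nonneg z) hz).div_const c).of_norm_bounded
    fun n => ?_
  rw [norm_div, norm_pow]
  gcongr
  exact hle n

@[simp]
lemma qExp_zero (q : ℂ) : qExp q 0 = 1 := by
  rw [qExp, tsum_eq_single 0 fun n hn => by rw [zero_pow hn, zero_div]]
  simp

lemma one_sub_mul_qExp (hq : ‖q‖ < 1) (hz : ‖z‖ < 1) :
    (1 - z) * qExp q z = qExp q (q * z) := by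
  have hqz : ‖q * z‖ < 1 := norm_mul_lt_one hq.le hz
  have hsum := summable_pow_div_qPoch hq hz
  have hsum' := summable_pow_div_qPoch hq hqz
  have hdiff : Summable fun n => (z ^ n - (q * z) ^ n) / qPoch q n := by
    simpa only [sub_div] using hsum.sub hsum'
  have hshift (n : ℕ) :
      (z ^ (n + 1) - (q * z) ^ (n + 1)) / qPoch q (n + 1) = z * (z ^ n / qPoch q n) := by
    rw [qPoch_succ, mul_pow]
    field_simp [qPoch_ne_zero hq n, one_sub_ne_zero_of_norm_lt_one (norm_pow_succ_lt_one hq n)]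
    ring
  have : qExp q z - qExp q (q * z) = z * qExp q z := by
    rw [qExp, qExp, ← hsum.tsum_sub hsum']
    simp_rw [← sub_div]
    rw [hdiff.tsum_eq_zero_add, tsum_congr hshift, tsum_mul_left]
    simp
  linear_combination this

lemma tendsto_qExp_nhds_zero (hq : ‖q‖ < 1) : Tendsto (qExp q) (𝓝 0) (𝓝 1) := by
  obtain ⟨c, hc, hle⟩ := exists_pos_le_norm_qPoch hq
  have h : Tendsto (qExp q) (𝓝 0) (𝓝 (qExp q 0)) := by
    refine tendsto_tsum_of_dominated_convergence (bound := fun n => (1 / 2 : ℝ) ^ n / c)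
      (summable_geometric_two.div_const c) (fun n => ?_) ?_
    · exact ((continuous_pow n).tendsto 0).div_const _
    · filter_upwards [Metric.closedBall_mem_nhds (0 : ℂ) one_half_pos] with w hw n
      rw [norm_div, norm_pow]
      gcongr
      · simpa using hw
      · exact hle n
  rwa [qExp_zero] at h

lemma multipliable_one_sub_mul_pow (hq : ‖q‖ < 1) (z : ℂ) :
    Multipliable fun i : ℕ => 1 - z * q ^ i := by
  simpa [sub_eq_add_neg] using Complex.multipliable_one_add_of_summable
    ((summable_geometric_of_norm_lt_one hq).mul_left z).neg

lemma pochInf_eq_one_sub_mul (hq : ‖q‖ < 1) (z : ℂ) :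
    pochInf z q = (1 - z) * pochInf (q * z) q := by
  have hshift : Multipliable fun i : ℕ => 1 - z * q ^ (i + 1) :=
    (multipliable_one_sub_mul_pow hq (q * z)).congr fun i => by ring
  rw [pochInf, tprod_eq_zero_mul' (f := fun i => 1 - z * q ^ i) hshift, pow_zero, mul_one,
    pochInf]
  exact congrArg _ (tprod_congr fun i => by ring)

lemma tendsto_pochInf_pow_mul (hq : ‖q‖ < 1) (hz : ‖z‖ < 1) :
    Tendsto (fun k : ℕ => pochInf (q ^ k * z) q) atTop (𝓝 1) := by
  have hlog : Summable fun i : ℕ => Complex.log (1 - z * q ^ i) :=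
    ((summable_geometric_of_norm_lt_one hq).mul_left z).clog_one_sub
  have htail (k : ℕ) :
      pochInf (q ^ k * z) q = Complex.exp (∑' i, Complex.log (1 - z * q ^ (i + k))) := by
    rw [Complex.cexp_tsum_eq_tprod
      (fun i => one_sub_ne_zero_of_norm_lt_one (by
        rw [mul_comm]; exact norm_mul_lt_one (norm_pow_le_one hq.le _) hz))
      ((summable_nat_add_iff k).mpr hlog)]
    exact tprod_congr fun i => by ring
  simpa [htail] using (tendsto_sum_nat_add fun i => Complex.log (1 - z * q ^ i)).cexp

lemma pochInf_mul_qExp (hq : ‖q‖ < 1) (hz : ‖z‖ < 1) : pochInf z q * qExp q z = 1 := by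
  have hinv (k : ℕ) : pochInf (q ^ k * z) q * qExp q (q ^ k * z) = pochInf z q * qExp q z := by
    induction k with
    | zero => simp
    | succ k ih =>
      have hk : ‖q ^ k * z‖ < 1 := norm_mul_lt_one (norm_pow_le_one hq.le k) hz
      rw [← ih, pochInf_eq_one_sub_mul hq (q ^ k * z), mul_assoc, mul_left_comm,
        one_sub_mul_qExp hq hk, pow_succ', mul_assoc]
  have hlim :
      Tendsto (fun k : ℕ => pochInf (q ^ k * z) q * qExp q (q ^ k * z)) atTop (𝓝 1) := by
    have hzero : Tendsto (fun k : ℕ => q ^ k * z) atTop (𝓝 0) := by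
      simpa using (tendsto_pow_atTop_nhds_zero_of_norm_lt_one hq).mul_const z
    simpa using (tendsto_pochInf_pow_mul hq hz).mul ((tendsto_qExp_nhds_zero hq).comp hzero)
  simp only [hinv] at hlim
  exact tendsto_const_nhds_iff.mp hlim

lemma hasSum_pow_div_qPoch (hq : ‖q‖ < 1) (hz : ‖z‖ < 1) :
    HasSum (fun n : ℕ => z ^ n / qPoch q n) (pochInf z q)⁻¹ := by
  rw [inv_eq_of_mul_eq_one_right (pochInf_mul_qExp hq hz)]
  exact (summable_pow_div_qPoch hq hz).hasSum

lemma tsum_tsum_pow_pow_mul (hq : ‖q‖ < 1) {f : ℕ → ℂ} {C : ℝ} (hf : ∀ n, ‖f n‖ ≤ C) :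
    ∑' m : ℕ, ∑' n : ℕ, (q ^ (m + 1)) ^ (n + 1) * f n
      = ∑' n : ℕ, q ^ (n + 1) / (1 - q ^ (n + 1)) * f n := by
  have hgeom := summable_geometric_of_lt_one (norm_nonneg q) hq
  have hsum : Summable (Function.uncurry fun m n : ℕ => (q ^ (m + 1)) ^ (n + 1) * f n) := by
    refine (hgeom.mul_of_nonneg (hgeom.mul_right C) (fun _ => by positivity)
      fun n => mul_nonneg (by positivity) ((norm_nonneg _).trans (hf 0))).of_norm_bounded ?_
    rintro ⟨m, n⟩
    simp only [Function.uncurry_apply_pair, norm_mul, norm_pow, ← pow_mul, ← mul_assoc,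
      ← pow_add]
    gcongr ?_ * ?_
    · exact pow_le_pow_of_le_one (norm_nonneg q) hq.le (by nlinarith)
    · exact hf n
  rw [← hsum.tsum_comm]
  refine tsum_congr fun n => ?_
  rw [tsum_mul_right, div_eq_mul_inv,
    ← tsum_geometric_of_norm_lt_one (norm_pow_succ_lt_one hq n), ← tsum_mul_left]
  congr 1
  exact tsum_congr fun m => by ring

end QPochhammer

theorem stmt11 (q : ℂ) (hq : ‖q‖ < 1) (hq0 : q ≠ 0) :
    ∑' n : ℕ, q ^ n / (qPoch q n * (1 - q ^ (n + 1)) ^ 2)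
      = q⁻¹ * ∑' m : ℕ, (1 / pochInf (q ^ (1 + m)) q - 1) := by
  obtain ⟨c, hc, hle⟩ := exists_pos_le_norm_qPoch hq
  have hbound (n : ℕ) : ‖(qPoch q (n + 1))⁻¹‖ ≤ c⁻¹ := by
    rw [norm_inv]
    exact inv_anti₀ hc (hle _)
  have hEuler (m : ℕ) : 1 / pochInf (q ^ (1 + m)) q - 1
      = ∑' n : ℕ, (q ^ (m + 1)) ^ (n + 1) * (qPoch q (n + 1))⁻¹ := by
    rw [add_comm 1 m]
    have h := (hasSum_nat_add_iff' 1).mpr (hasSum_pow_div_qPoch hq (norm_pow_succ_lt_one hq m))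
    simpa [div_eq_mul_inv] using h.tsum_eq.symm
  rw [tsum_congr hEuler, tsum_tsum_pow_pow_mul hq hbound, ← tsum_mul_left]
  refine tsum_congr fun n => ?_
  rw [qPoch_succ]
  field_simp [qPoch_ne_zero hq n, one_sub_ne_zero_of_norm_lt_one (norm_pow_succ_lt_one hq n)]
  ring
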